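/- arXiv:1608.08118 — 7 statements merged into one kernel-verified Lean document; each statement's English description precedes it below -/
import Mathlib

section
/- Poisson tail bound (Lemma A.1): Let ξ* be a real number with 0 < ξ* < e^{-2} and set a := |log ξ*|/2. Then for every natural number N ≥ 1 and every real ζ with 0 ≤ ζ ≤ ξ*·N, one has Σ_{n=N}^{∞} (ζ^n / n!) e^{-ζ} ≤ (e/(e-1)) · e^{-aN}. -/
open scoped BigOperators

lemma exp_tsum' (x : ℝ) : Real.exp x = ∑' n : ℕ, x ^ n / (n.factorial : ℝ) := by
  rw [Real.exp_eq_exp_ℝ, NormedSpace.exp_eq_tsum_div]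

/-- Poisson tail bound (Lemma A.1): for `0 < ξ* < e⁻²`, `a = |log ξ*|/2`, `N ≥ 1` and
`0 ≤ ζ ≤ ξ*·N`, the Poisson upper tail `Σ_{n ≥ N} ζⁿ/n! e^{-ζ}` is at most
`(e/(e-1))·e^{-aN}`. -/
theorem poisson_tail_bound (ξs : ℝ) (hξ0 : 0 < ξs) (hξ1 : ξs < Real.exp (-2))
    (a : ℝ) (ha : a = |Real.log ξs| / 2)
    (N : ℕ) (hN : 1 ≤ N) (ζ : ℝ) (hζ0 : 0 ≤ ζ) (hζ : ζ ≤ ξs * N) :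
    (∑' n : ℕ, ζ ^ (N + n) / (Nat.factorial (N + n) : ℝ) * Real.exp (-ζ))
      ≤ Real.exp 1 / (Real.exp 1 - 1) * Real.exp (-(a * N)) := by
  have hfacpos : (0 : ℝ) < (N.factorial : ℝ) := by positivity
  -- Step 1: the tail is at most ζ^N / N!
  have hs1 : Summable (fun n : ℕ => ζ ^ (N + n) / (Nat.factorial (N + n) : ℝ)
      * Real.exp (-ζ)) := by
    have h := ((Real.summable_pow_div_factorial ζ).mul_right (Real.exp (-ζ)))
    exact ((summable_nat_add_iff N).2 h).congr (fun n => by rw [add_comm])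
  have hs2 : Summable (fun n : ℕ =>
      (ζ ^ N / (N.factorial : ℝ) * Real.exp (-ζ)) * (ζ ^ n / (n.factorial : ℝ))) :=
    (Real.summable_pow_div_factorial ζ).mul_left _
  have hle : ∀ n : ℕ, ζ ^ (N + n) / (Nat.factorial (N + n) : ℝ) * Real.exp (-ζ)
      ≤ (ζ ^ N / (N.factorial : ℝ) * Real.exp (-ζ)) * (ζ ^ n / (n.factorial : ℝ)) := by
    intro n
    have hfac : ((N.factorial : ℝ) * (n.factorial : ℝ)) ≤ ((N + n).factorial : ℝ) := by
      exact_mod_cast Nat.le_of_dvd (Nat.factorial_pos _)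
        (Nat.factorial_mul_factorial_dvd_factorial_add N n)
    have hnum : (0:ℝ) ≤ ζ ^ (N + n) := by positivity
    have h1 : ζ ^ (N + n) / (Nat.factorial (N + n) : ℝ)
        ≤ ζ ^ (N + n) / ((N.factorial : ℝ) * (n.factorial : ℝ)) := by
      apply div_le_div_of_nonneg_left hnum (by positivity) hfac
    calc ζ ^ (N + n) / (Nat.factorial (N + n) : ℝ) * Real.exp (-ζ)
        ≤ ζ ^ (N + n) / ((N.factorial : ℝ) * (n.factorial : ℝ)) * Real.exp (-ζ) := by
          exact mul_le_mul_of_nonneg_right h1 (Real.exp_pos _).le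
      _ = (ζ ^ N / (N.factorial : ℝ) * Real.exp (-ζ)) * (ζ ^ n / (n.factorial : ℝ)) := by
          rw [pow_add]; ring
  have hstep1 : (∑' n : ℕ, ζ ^ (N + n) / (Nat.factorial (N + n) : ℝ) * Real.exp (-ζ))
      ≤ ζ ^ N / (N.factorial : ℝ) := by
    calc (∑' n : ℕ, ζ ^ (N + n) / (Nat.factorial (N + n) : ℝ) * Real.exp (-ζ))
        ≤ ∑' n : ℕ, (ζ ^ N / (N.factorial : ℝ) * Real.exp (-ζ))
            * (ζ ^ n / (n.factorial : ℝ)) := Summable.tsum_le_tsum hle hs1 hs2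
      _ = (ζ ^ N / (N.factorial : ℝ) * Real.exp (-ζ)) * Real.exp ζ := by
          rw [tsum_mul_left, ← exp_tsum']
      _ = ζ ^ N / (N.factorial : ℝ) := by
          rw [mul_assoc, ← Real.exp_add]; simp
  -- Step 2: ζ^N/N! ≤ ξs^N * N^N/N! ≤ ξs^N * e^N
  have hNpos : (0:ℝ) ≤ (N:ℝ) := Nat.cast_nonneg N
  have hstep2 : ζ ^ N / (N.factorial : ℝ) ≤ ξs ^ N * Real.exp N := by
    have h1 : ζ ^ N ≤ (ξs * N) ^ N := pow_le_pow_left₀ hζ0 hζ N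
    have h2 : (N:ℝ) ^ N / (N.factorial : ℝ) ≤ Real.exp N := by
      rw [exp_tsum' (N:ℝ)]
      exact Summable.le_tsum (Real.summable_pow_div_factorial (N:ℝ)) N
        (fun i _ => by positivity)
    calc ζ ^ N / (N.factorial : ℝ) ≤ (ξs * N) ^ N / (N.factorial : ℝ) := by
          gcongr
      _ = ξs ^ N * ((N:ℝ) ^ N / (N.factorial : ℝ)) := by rw [mul_pow]; ring
      _ ≤ ξs ^ N * Real.exp N := by
          exact mul_le_mul_of_nonneg_left h2 (by positivity)
  -- Step 3: rewrite RHS with s = sqrt ξs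
  set s := Real.sqrt ξs with hsdef
  have hs0 : 0 < s := Real.sqrt_pos.2 hξ0
  have hssq : s ^ 2 = ξs := Real.sq_sqrt hξ0.le
  have hlogneg : Real.log ξs < 0 :=
    Real.log_neg hξ0 (hξ1.trans (Real.exp_lt_one_iff.2 (by norm_num)))
  have hexp_eq : Real.exp (-(a * N)) = s ^ N := by
    have hlogs : Real.log s = Real.log ξs / 2 := Real.log_sqrt hξ0.le
    have : -(a * N) = (N:ℝ) * Real.log s := by
      rw [ha, abs_of_neg hlogneg, hlogs]; ring
    rw [this, Real.exp_nat_mul, Real.exp_log hs0]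
  -- Step 4: ξs^N * e^N = s^N * (s*e)^N ≤ s^N
  have hse : s * Real.exp 1 ≤ 1 := by
    have h1 : s < Real.exp (-1) := by
      have h2 : Real.exp (-1) ^ 2 = Real.exp (-2) := by
        rw [← Real.exp_nat_mul]; norm_num
      nlinarith [hssq, (Real.exp_pos (-1)).le, hs0.le]
    have h3 : Real.exp (-1) * Real.exp 1 = 1 := by
      rw [← Real.exp_add]; norm_num
    nlinarith [Real.exp_pos 1]
  have hstep3 : ξs ^ N * Real.exp N ≤ s ^ N := by
    have hexpN : Real.exp (N:ℝ) = Real.exp 1 ^ N := by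
      rw [← Real.exp_nat_mul]; norm_num
    have : ξs ^ N * Real.exp N = s ^ N * (s * Real.exp 1) ^ N := by
      rw [← hssq, hexpN, mul_pow, ← pow_mul, two_mul, pow_add]
      ring
    rw [this]
    have : (s * Real.exp 1) ^ N ≤ 1 := pow_le_one₀ (by positivity) hse
    nlinarith [pow_pos hs0 N]
  -- combine
  have hone : (1:ℝ) ≤ Real.exp 1 / (Real.exp 1 - 1) := by
    have h2 : (1:ℝ) + 1 ≤ Real.exp 1 := Real.add_one_le_exp 1
    rw [one_le_div (by linarith)]
    linarith
  calc (∑' n : ℕ, ζ ^ (N + n) / (Nat.factorial (N + n) : ℝ) * Real.exp (-ζ))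
      ≤ ζ ^ N / (N.factorial : ℝ) := hstep1
    _ ≤ ξs ^ N * Real.exp N := hstep2
    _ ≤ s ^ N := hstep3
    _ = 1 * Real.exp (-(a * N)) := by rw [hexp_eq, one_mul]
    _ ≤ Real.exp 1 / (Real.exp 1 - 1) * Real.exp (-(a * N)) :=
        mul_le_mul_of_nonneg_right hone (Real.exp_pos _).le
end

section
/- Calculus lemma (Lemma 5.3): Suppose {Z_k}_{k≥1} is a sequence of real numbers with 0 ≤ Z_k ≤ 1 for every k, and suppose there exist ε ∈ [0, 1/4] and an integer k* ≥ 1 such that Z_k ≤ ε^k + Σ_{m=1}^{k-1} ε^{k-m} Z_m for every k ≥ k*+1. Then Z_k ≤ (4ε)^{k−k*} for every k ≥ k*. -/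
open scoped BigOperators

/-- Calculus lemma (Lemma 5.3): if `0 ≤ Z_k ≤ 1` for all `k ≥ 1`, `ε ∈ [0,1/4]`,
`k* ≥ 1`, and `Z_k ≤ ε^k + Σ_{m=1}^{k-1} ε^{k-m} Z_m` for all `k ≥ k*+1`,
then `Z_k ≤ (4ε)^{k-k*}` for all `k ≥ k*`. -/
theorem calculus_lemma (Z : ℕ → ℝ) (hZ : ∀ k, 1 ≤ k → 0 ≤ Z k ∧ Z k ≤ 1)
    (ε : ℝ) (hε0 : 0 ≤ ε) (hε1 : ε ≤ 1 / 4) (ks : ℕ) (hks : 1 ≤ ks)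
    (hrec : ∀ k, ks + 1 ≤ k →
      Z k ≤ ε ^ k + ∑ m ∈ Finset.Icc 1 (k - 1), ε ^ (k - m) * Z m) :
    ∀ k, ks ≤ k → Z k ≤ (4 * ε) ^ (k - ks) := by
  have hεle1 : ε ≤ 1 := by linarith
  have hgeo : ∀ t : ℕ, ∑ i ∈ Finset.range t, ε ^ i ≤ 4 / 3 := by
    intro t
    have h := geom_sum_mul ε t
    have hp : (0:ℝ) ≤ ε ^ t := pow_nonneg hε0 t
    have hsnn : (0:ℝ) ≤ ∑ i ∈ Finset.range t, ε ^ i :=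
      Finset.sum_nonneg fun i _ => pow_nonneg hε0 i
    nlinarith [mul_le_mul_of_nonneg_left hε1 hsnn]
  intro k
  induction k using Nat.strong_induction_on with
  | _ k ih =>
    intro hk
    rcases eq_or_lt_of_le hk with h | h
    · rw [← h]
      simpa using (hZ ks hks).2
    · have hk1 : ks + 1 ≤ k := h
      set n := k - ks with hn
      have hn1 : 1 ≤ n := by omega
      have hIcc : Finset.Icc 1 (k - 1) = Finset.Ico 1 k := by
        rw [← Finset.Ico_add_one_right_eq_Icc]
        congr 1
        omega
      have hsplit :
          ∑ m ∈ Finset.Ico 1 k, ε ^ (k - m) * Z m =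
            ∑ m ∈ Finset.Ico 1 ks, ε ^ (k - m) * Z m +
              ∑ m ∈ Finset.Ico ks k, ε ^ (k - m) * Z m :=
        (Finset.sum_Ico_consecutive _ hks (le_of_lt h)).symm
      -- bound the early sum
      have hS1 : ∑ m ∈ Finset.Ico 1 ks, ε ^ (k - m) * Z m ≤ 4 / 3 * ε ^ (n + 1) := by
        have step : ∀ m ∈ Finset.Ico 1 ks,
            ε ^ (k - m) * Z m ≤ ε ^ (n + 1) * ε ^ (ks - 1 - m) := by
          intro m hm
          simp only [Finset.mem_Ico] at hm
          have hzm := hZ m hm.1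
          have heq : (n + 1) + (ks - 1 - m) = k - m := by omega
          have : ε ^ (k - m) * Z m ≤ ε ^ (k - m) * 1 :=
            mul_le_mul_of_nonneg_left hzm.2 (pow_nonneg hε0 _)
          calc ε ^ (k - m) * Z m ≤ ε ^ (k - m) := by linarith
            _ = ε ^ (n + 1) * ε ^ (ks - 1 - m) := by rw [← pow_add, heq]
        calc ∑ m ∈ Finset.Ico 1 ks, ε ^ (k - m) * Z m
            ≤ ∑ m ∈ Finset.Ico 1 ks, ε ^ (n + 1) * ε ^ (ks - 1 - m) :=
              Finset.sum_le_sum step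
          _ = ε ^ (n + 1) * ∑ m ∈ Finset.Ico 1 ks, ε ^ (ks - 1 - m) := by
              rw [Finset.mul_sum]
          _ = ε ^ (n + 1) * ∑ j ∈ Finset.range (ks - 1), ε ^ (ks - 1 - 1 - j) := by
              rw [Finset.sum_Ico_eq_sum_range]
              congr 1
              apply Finset.sum_congr rfl
              intro j hj
              congr 1
              omega
          _ = ε ^ (n + 1) * ∑ j ∈ Finset.range (ks - 1), ε ^ j := by
              rw [Finset.sum_range_reflect (fun i => ε ^ i) (ks - 1)]
          _ ≤ ε ^ (n + 1) * (4 / 3) :=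
              mul_le_mul_of_nonneg_left (hgeo _) (pow_nonneg hε0 _)
          _ = 4 / 3 * ε ^ (n + 1) := by ring
      -- bound the late sum
      have hS2 : ∑ m ∈ Finset.Ico ks k, ε ^ (k - m) * Z m ≤
          ((4:ℝ) ^ n - 1) / 3 * ε ^ n := by
        have step : ∀ m ∈ Finset.Ico ks k,
            ε ^ (k - m) * Z m ≤ (4:ℝ) ^ (m - ks) * ε ^ n := by
          intro m hm
          simp only [Finset.mem_Ico] at hm
          have hZm := ih m hm.2 hm.1
          have h1 : ε ^ (k - m) * Z m ≤ ε ^ (k - m) * (4 * ε) ^ (m - ks) := by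
            have hZm0 := (hZ m (le_trans hks hm.1)).1
            exact mul_le_mul_of_nonneg_left hZm (pow_nonneg hε0 _)
          have heq : (k - m) + (m - ks) = n := by omega
          calc ε ^ (k - m) * Z m ≤ ε ^ (k - m) * (4 * ε) ^ (m - ks) := h1
            _ = (4:ℝ) ^ (m - ks) * (ε ^ (k - m) * ε ^ (m - ks)) := by
                rw [mul_pow]; ring
            _ = (4:ℝ) ^ (m - ks) * ε ^ n := by rw [← pow_add, heq]
        calc ∑ m ∈ Finset.Ico ks k, ε ^ (k - m) * Z m
            ≤ ∑ m ∈ Finset.Ico ks k, (4:ℝ) ^ (m - ks) * ε ^ n :=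
              Finset.sum_le_sum step
          _ = ∑ j ∈ Finset.range (k - ks), (4:ℝ) ^ (ks + j - ks) * ε ^ n := by
              rw [Finset.sum_Ico_eq_sum_range]
          _ = (∑ j ∈ Finset.range n, (4:ℝ) ^ j) * ε ^ n := by
              rw [Finset.sum_mul]
              apply Finset.sum_congr rfl
              intro j hj
              congr 2
              omega
          _ = ((4:ℝ) ^ n - 1) / (4 - 1) * ε ^ n := by
              rw [geom_sum_eq (by norm_num : (4:ℝ) ≠ 1)]
          _ = ((4:ℝ) ^ n - 1) / 3 * ε ^ n := by norm_num
      have hεk : ε ^ k ≤ ε ^ (n + 1) := by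
        apply pow_le_pow_of_le_one hε0 hεle1
        omega
      have hrecn := hrec k hk1
      rw [hIcc, hsplit] at hrecn
      have hεn : (0:ℝ) ≤ ε ^ n := pow_nonneg hε0 n
      have h4n : (4:ℝ) ^ 1 ≤ 4 ^ n := pow_le_pow_right₀ (by norm_num) hn1
      have hεn1 : ε ^ (n + 1) ≤ 1 / 4 * ε ^ n := by
        rw [pow_succ]
        nlinarith
      have hgoal : (4 * ε) ^ n = 4 ^ n * ε ^ n := mul_pow 4 ε n
      rw [hgoal]
      nlinarith [mul_le_mul_of_nonneg_right h4n hεn]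
end

section
/- Special case of Lemma 5.3 (case k* = 1): Suppose {Z_k}_{k≥1} is a sequence of real numbers with 0 ≤ Z_k ≤ 1 for every k, and suppose there exists ε ∈ [0, 1/4] such that Z_1 ≤ ε and Z_k ≤ ε^k + Σ_{m=1}^{k-1} ε^{k-m} Z_m for every k ≥ 2. Then Z_k ≤ (2ε)^{k−1} for every k ≥ 1. -/
open scoped BigOperators

/-- Special case of Lemma 5.3 (`k* = 1`): if `0 ≤ Z_k ≤ 1` for all `k ≥ 1`,
`ε ∈ [0,1/4]`, `Z_1 ≤ ε`, and `Z_k ≤ ε^k + Σ_{m=1}^{k-1} ε^{k-m} Z_m` for all `k ≥ 2`,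
then `Z_k ≤ (2ε)^{k-1}` for all `k ≥ 1`. -/
theorem calculus_lemma_base_case (Z : ℕ → ℝ) (hZ : ∀ k, 1 ≤ k → 0 ≤ Z k ∧ Z k ≤ 1)
    (ε : ℝ) (hε0 : 0 ≤ ε) (hε1 : ε ≤ 1 / 4) (h1 : Z 1 ≤ ε)
    (hrec : ∀ k, 2 ≤ k →
      Z k ≤ ε ^ k + ∑ m ∈ Finset.Icc 1 (k - 1), ε ^ (k - m) * Z m) :
    ∀ k, 1 ≤ k → Z k ≤ (2 * ε) ^ (k - 1) := by
  intro k
  induction k using Nat.strong_induction_on with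
  | _ k ih =>
    intro hk
    rcases eq_or_lt_of_le hk with h | h
    · simpa [← h] using (hZ 1 le_rfl).2
    · have hk2 : 2 ≤ k := h
      have hε1' : ε ≤ 1 := by linarith
      have step1 : Z k ≤ ε ^ k + ∑ m ∈ Finset.Icc 1 (k - 1),
          ε ^ (k - m) * (2 * ε) ^ (m - 1) := by
        refine le_trans (hrec k hk2) ?_
        gcongr with m hm
        · obtain ⟨hm1, hm2⟩ := Finset.mem_Icc.1 hm
          exact ih m (by omega) hm1
      have heq : ∑ m ∈ Finset.Icc 1 (k - 1), ε ^ (k - m) * (2 * ε) ^ (m - 1)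
          = ε ^ (k - 1) * ∑ m ∈ Finset.Icc 1 (k - 1), 2 ^ (m - 1) := by
        rw [Finset.mul_sum]
        refine Finset.sum_congr rfl fun m hm => ?_
        obtain ⟨hm1, hm2⟩ := Finset.mem_Icc.1 hm
        rw [mul_pow]
        rw [show k - 1 = (k - m) + (m - 1) by omega, pow_add]
        ring
      have hgeom : ∑ m ∈ Finset.Icc 1 (k - 1), (2:ℝ) ^ (m - 1) = 2 ^ (k - 1) - 1 := by
        rw [show Finset.Icc 1 (k-1) = Finset.Ico 1 ((k-1)+1) by rfl]
        rw [Finset.sum_Ico_eq_sum_range]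
        simp only [Nat.add_sub_cancel, Nat.add_sub_cancel_left]
        have := geom_sum_eq (by norm_num : (2:ℝ) ≠ 1) (k-1)
        rw [this]; ring
      have hεk : ε ^ k ≤ ε ^ (k - 1) :=
        pow_le_pow_of_le_one hε0 hε1' (by omega)
      have hεpow : (0:ℝ) ≤ ε ^ (k - 1) := pow_nonneg hε0 _
      calc Z k ≤ ε ^ k + ε ^ (k - 1) * (2 ^ (k - 1) - 1) := by
            rw [← hgeom, ← heq]; exact step1
        _ ≤ ε ^ (k - 1) + ε ^ (k - 1) * (2 ^ (k - 1) - 1) := by linarith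
        _ = 2 ^ (k - 1) * ε ^ (k - 1) := by ring
        _ = (2 * ε) ^ (k - 1) := (mul_pow 2 ε (k-1)).symm
end

section
/- Displacement bound for the coalescing tagged particle (Lemma A.2, dimensionless form): Let V_0 > 0 and let (v_k)_{k≥1} be a sequence of positive reals, and set V_k := V_0 + Σ_{j=1}^k v_j. Let (ξ_k)_{k≥0} be a sequence of vectors in ℝ³ with ξ_0 = 0 satisfying |ξ_{k+1}| ≤ |ξ_k| + (v_{k+1}/V_{k+1})·(V_k^{1/3} + v_{k+1}^{1/3}) for every k ≥ 0. Then |ξ_k| ≤ 6·(V_k^{1/3} − V_0^{1/3}) for every k ≥ 0. -/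
open scoped BigOperators

lemma step_bound (Vv vv : ℝ) (hV : 0 < Vv) (hv : 0 < vv) :
    vv / (Vv + vv) * (Vv ^ ((1:ℝ)/3) + vv ^ ((1:ℝ)/3)) ≤
      6 * ((Vv + vv) ^ ((1:ℝ)/3) - Vv ^ ((1:ℝ)/3)) := by
  set a := Vv ^ ((1:ℝ)/3) with ha'
  set b := vv ^ ((1:ℝ)/3) with hb'
  set c := (Vv + vv) ^ ((1:ℝ)/3) with hc'
  have hVv : 0 < Vv + vv := by linarith
  have hapos : 0 < a := Real.rpow_pos_of_pos hV _
  have hbpos : 0 < b := Real.rpow_pos_of_pos hv _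
  have hcpos : 0 < c := Real.rpow_pos_of_pos hVv _
  have ha3 : a ^ 3 = Vv := by
    rw [ha', ← Real.rpow_natCast (Vv ^ ((1:ℝ)/3)) 3, ← Real.rpow_mul hV.le]; norm_num
  have hb3 : b ^ 3 = vv := by
    rw [hb', ← Real.rpow_natCast (vv ^ ((1:ℝ)/3)) 3, ← Real.rpow_mul hv.le]; norm_num
  have hc3 : c ^ 3 = Vv + vv := by
    rw [hc', ← Real.rpow_natCast ((Vv+vv) ^ ((1:ℝ)/3)) 3, ← Real.rpow_mul hVv.le]; norm_num
  have hac : a ≤ c := Real.rpow_le_rpow hV.le (by linarith) (by norm_num)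
  have hbc : b ≤ c := Real.rpow_le_rpow hv.le (by linarith) (by norm_num)
  rw [div_mul_eq_mul_div, div_le_iff₀ hVv]
  nlinarith [sq_nonneg (c - a), sq_nonneg (c - b), mul_pos hapos hbpos,
    mul_nonneg (mul_nonneg hcpos.le hcpos.le) (sub_nonneg.2 hac),
    mul_nonneg (sub_nonneg.2 hbc) (mul_nonneg hbpos.le hbpos.le),
    mul_nonneg (mul_nonneg hapos.le hcpos.le) (sub_nonneg.2 hac)]

/-- Displacement bound for the coalescing tagged particle (Lemma A.2, dimensionless
form): with `V_k = V_0 + Σ_{j=1}^k v_j` and `|ξ_{k+1}| ≤ |ξ_k| +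
(v_{k+1}/V_{k+1})(V_k^{1/3} + v_{k+1}^{1/3})`, `ξ_0 = 0`, one has
`|ξ_k| ≤ 6 (V_k^{1/3} − V_0^{1/3})`. -/
theorem displacement_bound (V0 : ℝ) (hV0 : 0 < V0)
    (v : ℕ → ℝ) (hv : ∀ j, 1 ≤ j → 0 < v j)
    (V : ℕ → ℝ) (hV : ∀ k, V k = V0 + ∑ j ∈ Finset.Icc 1 k, v j)
    (ξ : ℕ → EuclideanSpace ℝ (Fin 3)) (hξ0 : ξ 0 = 0)
    (hξ : ∀ k, ‖ξ (k + 1)‖ ≤ ‖ξ k‖ +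
      v (k + 1) / V (k + 1) * ((V k) ^ ((1 : ℝ) / 3) + (v (k + 1)) ^ ((1 : ℝ) / 3))) :
    ∀ k, ‖ξ k‖ ≤ 6 * ((V k) ^ ((1 : ℝ) / 3) - V0 ^ ((1 : ℝ) / 3)) := by
  have hVpos : ∀ k, 0 < V k := by
    intro k
    rw [hV k]
    have : 0 ≤ ∑ j ∈ Finset.Icc 1 k, v j :=
      Finset.sum_nonneg fun j hj => (hv j (Finset.mem_Icc.mp hj).1).le
    linarith
  have hVsucc : ∀ k, V (k + 1) = V k + v (k + 1) := by
    intro k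
    rw [hV (k+1), hV k, Finset.sum_Icc_succ_top (Nat.le_add_left 1 k)]
    ring
  intro k
  induction k with
  | zero =>
    rw [hξ0]
    have : V 0 = V0 := by rw [hV 0]; simp
    simp [this]
  | succ k ih =>
    have hstep := step_bound (V k) (v (k+1)) (hVpos k) (hv (k+1) (by omega))
    rw [← hVsucc k] at hstep
    calc ‖ξ (k+1)‖ ≤ ‖ξ k‖ + v (k + 1) / V (k + 1) * ((V k) ^ ((1 : ℝ) / 3) + (v (k + 1)) ^ ((1 : ℝ) / 3)) := hξ k
    _ ≤ 6 * ((V k) ^ ((1:ℝ)/3) - V0 ^ ((1:ℝ)/3)) + 6 * ((V (k+1)) ^ ((1:ℝ)/3) - (V k) ^ ((1:ℝ)/3)) := by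
        gcongr
    _ = 6 * ((V (k+1)) ^ ((1:ℝ)/3) - V0 ^ ((1:ℝ)/3)) := by ring
end

section
/- Geometric integral estimate (Lemma 5.2): Let σ := (3/(4π))^{1/3} and let G : [0,∞) → [0,∞) be a measurable probability density (∫_0^∞ G(v) dv = 1) with finite first moment M₁ := ∫_0^∞ v G(v) dv < ∞. Then there exists a constant K > 0, depending only on M₁, such that for all reals 0 < V' ≤ V and every measurable map Z : [0,∞) → ℝ³ satisfying |Z(v)| ≤ σ·(V'^{1/3} + v^{1/3})·(V − V')/V for every v ≥ 0, one has ∫_0^∞ G(v) · vol( B(Z(v), σ(V^{1/3} + v^{1/3})) \ B(0, σ(V'^{1/3} + v^{1/3})) ) dv ≤ K·((V − V') + 1). -/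
open MeasureTheory

private lemma cube_rpow {x : ℝ} (hx : 0 ≤ x) : (x ^ ((1 : ℝ) / 3)) ^ 3 = x := by
  rw [← Real.rpow_natCast (x ^ ((1 : ℝ) / 3)) 3, ← Real.rpow_mul hx]
  norm_num

set_option maxHeartbeats 1000000 in
private lemma key_real (σ a a' b c u w v z : ℝ)
    (hσ0 : 0 < σ) (hσ3 : σ ^ 3 * (4 * Real.pi / 3) = 1)
    (ha0 : 0 < a) (ha'0 : 0 ≤ a') (hb0 : 0 ≤ b) (hc0 : 0 ≤ c)
    (haa : a' ≤ a) (hca : c ≤ a)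
    (hcw : c ^ 3 = w) (hbv : b ^ 3 = v) (hwa : (a - a') * a ^ 2 ≤ w)
    (hu0 : 0 ≤ u) (hu1 : u ≤ 1) (hua : u * a ^ 3 = w)
    (hz0 : 0 ≤ z) (hz : z ≤ σ * (a' + b) * u) :
    (z + σ * (a + b)) ^ 3 * (4 * Real.pi / 3)
      ≤ 144 * (w + 1) * (v + 1) + (σ * (a' + b)) ^ 3 * (4 * Real.pi / 3) := by
  have hw0 : 0 ≤ w := by nlinarith [pow_nonneg hc0 3]
  have hv0 : 0 ≤ v := by nlinarith [pow_nonneg hb0 3]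
  obtain ⟨p, hp⟩ : ∃ p : ℝ, p = a' + b := ⟨_, rfl⟩
  obtain ⟨q, hq⟩ : ∃ q : ℝ, q = p * u + (a + b) := ⟨_, rfl⟩
  have hp0 : 0 ≤ p := by rw [hp]; positivity
  have hpab : p ≤ a + b := by rw [hp]; linarith
  have hpq : p ≤ q := by rw [hq]; nlinarith [mul_nonneg hp0 hu0]
  have hq0 : 0 ≤ q := le_trans hp0 hpq
  have hq2 : q ≤ 2 * (a + b) := by
    rw [hq]
    nlinarith [mul_le_mul_of_nonneg_left hu1 hp0]
  -- a - a' ≤ c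
  have hca' : a - a' ≤ c := by
    have h2 : c ^ 3 ≤ c * a ^ 2 := by
      nlinarith [mul_nonneg hc0 (mul_nonneg (sub_nonneg.2 hca) (add_nonneg ha0.le hc0))]
    nlinarith [mul_pos ha0 ha0]
  have hb2 : b ^ 2 ≤ v + 1 := by
    nlinarith [mul_nonneg hb0 (sq_nonneg (b - 1)), sq_nonneg (b - 1)]
  have hc1 : c ≤ w + 1 := by
    nlinarith [mul_nonneg hc0 (sq_nonneg (c - 1)), sq_nonneg (c - 1)]
  -- step 1 : z + σ(a+b) ≤ σ q
  have hzb : z + σ * (a + b) ≤ σ * q := by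
    have hexp : σ * q = σ * p * u + σ * (a + b) := by rw [hq]; ring
    have hz' : z ≤ σ * p * u := by rw [hp]; exact hz
    linarith
  have hcube : (z + σ * (a + b)) ^ 3 ≤ σ ^ 3 * q ^ 3 := by
    have h := pow_le_pow_left₀ (by positivity : (0:ℝ) ≤ z + σ * (a + b)) hzb 3
    calc (z + σ * (a + b)) ^ 3 ≤ (σ * q) ^ 3 := h
      _ = σ ^ 3 * q ^ 3 := by ring
  -- main polynomial estimate
  have hA : q ^ 3 - p ^ 3 ≤ 3 * (q - p) * q ^ 2 := by
    have hid : 3 * (q - p) * q ^ 2 - (q ^ 3 - p ^ 3) = (q - p) ^ 2 * (2 * q + p) := by ring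
    have h := mul_nonneg (sq_nonneg (q - p)) (show (0:ℝ) ≤ 2 * q + p by linarith)
    linarith
  have hq2' : q ^ 2 ≤ 4 * (a + b) ^ 2 := by nlinarith [hq0, hq2]
  have hqp : q - p = p * u + (a - a') := by rw [hq, hp]; ring
  have h3qp : 3 * (q - p) * q ^ 2 ≤ 12 * (p * u) * (a + b) ^ 2 + 12 * (a - a') * (a + b) ^ 2 := by
    have h0 : (0:ℝ) ≤ 3 * (q - p) := by linarith
    calc 3 * (q - p) * q ^ 2
        ≤ 3 * (q - p) * (4 * (a + b) ^ 2) := by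
          rw [mul_assoc, mul_assoc]
          exact mul_le_mul_of_nonneg_left (by nlinarith [hq2']) (by norm_num)
      _ = 12 * (p * u + (a - a')) * (a + b) ^ 2 := by rw [← hqp]; ring
      _ = 12 * (p * u) * (a + b) ^ 2 + 12 * (a - a') * (a + b) ^ 2 := by ring
  have hB : p * u * (a + b) ^ 2 ≤ 4 * (w + v) := by
    have h1 : p * u * (a + b) ^ 2 ≤ u * (a + b) ^ 3 := by
      nlinarith [mul_nonneg (mul_nonneg hu0 (sq_nonneg (a + b))) (sub_nonneg.2 hpab)]
    have h2 : (a + b) ^ 3 ≤ 4 * (a ^ 3 + b ^ 3) := by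
      nlinarith [mul_nonneg (add_nonneg ha0.le hb0) (sq_nonneg (a - b))]
    have h3 : u * (a + b) ^ 3 ≤ u * (4 * (a ^ 3 + b ^ 3)) := mul_le_mul_of_nonneg_left h2 hu0
    have h4 : u * b ^ 3 ≤ b ^ 3 := by nlinarith [pow_nonneg hb0 3]
    linarith [h1, h3, h4]
  have hC : (a - a') * (a + b) ^ 2 ≤ 2 * w + 2 * ((w + 1) * (v + 1)) := by
    have h2 : (a - a') * b ^ 2 ≤ c * b ^ 2 := mul_le_mul_of_nonneg_right hca' (sq_nonneg b)
    have h3 : c * b ^ 2 ≤ (w + 1) * (v + 1) :=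
      mul_le_mul hc1 hb2 (sq_nonneg b) (by linarith)
    have h5 : (a - a') * (a + b) ^ 2 ≤ (a - a') * (2 * a ^ 2 + 2 * b ^ 2) :=
      mul_le_mul_of_nonneg_left (by nlinarith [sq_nonneg (a - b)]) (sub_nonneg.2 haa)
    linarith [h2, h3, h5, hwa]
  have hwv : w ≤ (w + 1) * (v + 1) := by nlinarith [mul_nonneg hw0 hv0]
  have hvv : v ≤ (w + 1) * (v + 1) := by nlinarith [mul_nonneg hw0 hv0]
  have hmain : q ^ 3 ≤ 144 * (w + 1) * (v + 1) + p ^ 3 := by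
    linarith [hA, h3qp, hB, hC, hwv, hvv]
  have hfin : (σ * (a' + b)) ^ 3 * (4 * Real.pi / 3) = p ^ 3 := by
    rw [hp]; linear_combination (a' + b) ^ 3 * hσ3
  calc (z + σ * (a + b)) ^ 3 * (4 * Real.pi / 3)
      ≤ σ ^ 3 * q ^ 3 * (4 * Real.pi / 3) := by
        apply mul_le_mul_of_nonneg_right hcube
        positivity
    _ = q ^ 3 := by linear_combination q ^ 3 * hσ3
    _ ≤ 144 * (w + 1) * (v + 1) + p ^ 3 := hmain
    _ = 144 * (w + 1) * (v + 1) + (σ * (a' + b)) ^ 3 * (4 * Real.pi / 3) := by rw [hfin]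

private lemma shell_bound (x : EuclideanSpace ℝ (Fin 3)) (R r D : ℝ)
    (hr0 : 0 ≤ r) (hrR : r ≤ R) (hD : 0 ≤ D)
    (hkey : (‖x‖ + R) ^ 3 * (4 * Real.pi / 3) ≤ D + r ^ 3 * (4 * Real.pi / 3)) :
    volume (Metric.closedBall x R \ Metric.closedBall (0 : EuclideanSpace ℝ (Fin 3)) r)
      ≤ ENNReal.ofReal D := by
  have hπ := Real.pi_pos
  have hz0 : 0 ≤ ‖x‖ := norm_nonneg _
  have hρ0 : 0 ≤ ‖x‖ + R := by linarith
  have hrρ : r ≤ ‖x‖ + R := by linarith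
  have hsub : Metric.closedBall x R \ Metric.closedBall (0 : EuclideanSpace ℝ (Fin 3)) r ⊆
      Metric.closedBall (0 : EuclideanSpace ℝ (Fin 3)) (‖x‖ + R) \
        Metric.closedBall (0 : EuclideanSpace ℝ (Fin 3)) r := by
    apply Set.diff_subset_diff_left
    apply Metric.closedBall_subset_closedBall'
    rw [dist_zero_right]
    linarith
  refine le_trans (measure_mono hsub) ?_
  rw [measure_diff (Metric.closedBall_subset_closedBall hrρ)
    measurableSet_closedBall.nullMeasurableSet measure_closedBall_lt_top.ne]
  rw [EuclideanSpace.volume_closedBall, EuclideanSpace.volume_closedBall]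
  simp only [Fintype.card_fin]
  have hGam : Real.Gamma ((3 : ℝ) / 2 + 1) = 3 / 4 * Real.sqrt Real.pi := by
    rw [Real.Gamma_add_one (by norm_num), show (3 : ℝ) / 2 = 1 / 2 + 1 by norm_num,
      Real.Gamma_add_one (by norm_num), Real.Gamma_one_half_eq]
    ring
  have hsq : Real.sqrt Real.pi ^ 2 = Real.pi := Real.sq_sqrt hπ.le
  have hsp : 0 < Real.sqrt Real.pi := Real.sqrt_pos.2 hπ
  have hconst : Real.sqrt Real.pi ^ 3 / Real.Gamma ((3 : ℕ) / 2 + 1) = 4 * Real.pi / 3 := by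
    push_cast
    rw [hGam]
    have h3 : Real.sqrt Real.pi ^ 3 = Real.pi * Real.sqrt Real.pi := by
      rw [pow_succ, hsq]
    rw [h3]
    field_simp
  rw [hconst]
  rw [tsub_le_iff_right]
  rw [← ENNReal.ofReal_pow hρ0, ← ENNReal.ofReal_pow hr0,
    ← ENNReal.ofReal_mul (pow_nonneg hρ0 3), ← ENNReal.ofReal_mul (pow_nonneg hr0 3),
    ← ENNReal.ofReal_add hD (by positivity)]
  exact ENNReal.ofReal_le_ofReal hkey

/-- Geometric integral estimate (Lemma 5.2): if `G` is a probability density on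
`[0,∞)` with finite first moment, then there is `K > 0` such that for all
`0 < V' ≤ V` and every measurable displacement `Z` with
`|Z(v)| ≤ σ(V'^{1/3}+v^{1/3})(V−V')/V`, the `G`-average of the volume of the shell
`B(Z(v), σ(V^{1/3}+v^{1/3})) \ B(0, σ(V'^{1/3}+v^{1/3}))` is at most `K((V−V')+1)`. -/
theorem geometric_integral_estimate (σ : ℝ) (hσ : σ = (3 / (4 * Real.pi)) ^ ((1 : ℝ) / 3))
    (G : ℝ → ℝ) (hGmeas : Measurable G) (hGnn : ∀ v, 0 ≤ G v)
    (hGprob : ∫ v in Set.Ioi (0 : ℝ), G v = 1)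
    (hM1 : IntegrableOn (fun v => v * G v) (Set.Ioi 0)) :
    ∃ K : ℝ, 0 < K ∧
      ∀ V' V : ℝ, 0 < V' → V' ≤ V →
        ∀ Z : ℝ → EuclideanSpace ℝ (Fin 3), Measurable Z →
          (∀ v, 0 ≤ v →
            ‖Z v‖ ≤ σ * (V' ^ ((1 : ℝ) / 3) + v ^ ((1 : ℝ) / 3)) * ((V - V') / V)) →
          (∫⁻ v in Set.Ioi (0 : ℝ), ENNReal.ofReal (G v) *
              volume (Metric.closedBall (Z v) (σ * (V ^ ((1 : ℝ) / 3) + v ^ ((1 : ℝ) / 3))) \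
                Metric.closedBall (0 : EuclideanSpace ℝ (Fin 3))
                  (σ * (V' ^ ((1 : ℝ) / 3) + v ^ ((1 : ℝ) / 3)))))
            ≤ ENNReal.ofReal (K * ((V - V') + 1)) := by
  have hπ := Real.pi_pos
  have hGint : IntegrableOn G (Set.Ioi 0) := by
    by_contra h
    rw [integral_undef h] at hGprob
    norm_num at hGprob
  have hM0 : 0 ≤ ∫ v in Set.Ioi (0 : ℝ), v * G v := by
    apply setIntegral_nonneg measurableSet_Ioi
    intro v hv
    exact mul_nonneg (le_of_lt hv) (hGnn v)
  refine ⟨144 * ((∫ v in Set.Ioi (0 : ℝ), v * G v) + 1), by positivity, ?_⟩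
  intro V' V hV' hVV Z hZmeas hZ
  have hV : 0 < V := lt_of_lt_of_le hV' hVV
  have hW0 : 0 ≤ V - V' := by linarith
  have hσ0 : 0 < σ := by rw [hσ]; exact Real.rpow_pos_of_pos (by positivity) _
  have hσ3 : σ ^ 3 * (4 * Real.pi / 3) = 1 := by
    rw [hσ, cube_rpow (by positivity)]
    field_simp
  -- pointwise volume bound
  have hpt : ∀ v ∈ Set.Ioi (0 : ℝ),
      volume (Metric.closedBall (Z v) (σ * (V ^ ((1 : ℝ) / 3) + v ^ ((1 : ℝ) / 3))) \
          Metric.closedBall (0 : EuclideanSpace ℝ (Fin 3))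
            (σ * (V' ^ ((1 : ℝ) / 3) + v ^ ((1 : ℝ) / 3))))
        ≤ ENNReal.ofReal (144 * ((V - V') + 1) * (v + 1)) := by
    intro v hv
    rw [Set.mem_Ioi] at hv
    have ha0 : 0 < V ^ ((1 : ℝ) / 3) := Real.rpow_pos_of_pos hV _
    have ha'0 : 0 ≤ V' ^ ((1 : ℝ) / 3) := Real.rpow_nonneg hV'.le _
    have hb0 : 0 ≤ v ^ ((1 : ℝ) / 3) := Real.rpow_nonneg hv.le _
    have haa : V' ^ ((1 : ℝ) / 3) ≤ V ^ ((1 : ℝ) / 3) :=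
      Real.rpow_le_rpow hV'.le hVV (by norm_num)
    apply shell_bound
    · positivity
    · apply mul_le_mul_of_nonneg_left _ hσ0.le
      linarith
    · positivity
    · have hkey := key_real σ (V ^ ((1 : ℝ) / 3)) (V' ^ ((1 : ℝ) / 3)) (v ^ ((1 : ℝ) / 3))
        ((V - V') ^ ((1 : ℝ) / 3)) ((V - V') / V) (V - V') v (‖Z v‖)
        hσ0 hσ3 ha0 ha'0 hb0 (Real.rpow_nonneg hW0 _) haa
        (Real.rpow_le_rpow hW0 (by linarith) (by norm_num))
        (cube_rpow hW0) (cube_rpow hv.le)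
        (by nlinarith [cube_rpow hV.le, cube_rpow hV'.le,
          mul_nonneg ha'0 (mul_nonneg (sub_nonneg.2 haa) (add_nonneg ha0.le ha'0))])
        (by positivity) (by rw [div_le_one hV]; linarith)
        (by rw [cube_rpow hV.le]; field_simp)
        (norm_nonneg _) (hZ v hv.le)
      exact hkey
  -- integrate the pointwise bound
  calc (∫⁻ v in Set.Ioi (0 : ℝ), ENNReal.ofReal (G v) *
          volume (Metric.closedBall (Z v) (σ * (V ^ ((1 : ℝ) / 3) + v ^ ((1 : ℝ) / 3))) \
            Metric.closedBall (0 : EuclideanSpace ℝ (Fin 3))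
              (σ * (V' ^ ((1 : ℝ) / 3) + v ^ ((1 : ℝ) / 3)))))
      ≤ ∫⁻ v in Set.Ioi (0 : ℝ), ENNReal.ofReal (G v) *
          ENNReal.ofReal (144 * ((V - V') + 1) * (v + 1)) := by
        apply setLIntegral_mono' measurableSet_Ioi
        intro v hv
        exact mul_le_mul_right (hpt v hv) _
    _ = ∫⁻ v in Set.Ioi (0 : ℝ), ENNReal.ofReal (144 * ((V - V') + 1)) *
          ENNReal.ofReal (G v * (v + 1)) := by
        apply setLIntegral_congr_fun measurableSet_Ioi
        intro v hv
        dsimp only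
        rw [Set.mem_Ioi] at hv
        rw [← ENNReal.ofReal_mul (hGnn v), ← ENNReal.ofReal_mul (by positivity)]
        congr 1
        ring
    _ = ENNReal.ofReal (144 * ((V - V') + 1)) *
          ∫⁻ v in Set.Ioi (0 : ℝ), ENNReal.ofReal (G v * (v + 1)) := by
        rw [lintegral_const_mul' _ _ ENNReal.ofReal_ne_top]
    _ = ENNReal.ofReal (144 * ((V - V') + 1)) *
          ENNReal.ofReal ((∫ v in Set.Ioi (0 : ℝ), v * G v) + 1) := by
        congr 1
        have heq : (fun v : ℝ => G v * (v + 1)) = fun v => v * G v + G v := by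
          funext v; ring
        have hint : Integrable (fun v => G v * (v + 1))
            (volume.restrict (Set.Ioi (0 : ℝ))) := by
          rw [heq]
          exact hM1.add hGint
        have hae : 0 ≤ᵐ[volume.restrict (Set.Ioi (0 : ℝ))] fun v => G v * (v + 1) := by
          refine (ae_restrict_iff' measurableSet_Ioi).2 ?_
          filter_upwards with v hv
          rw [Set.mem_Ioi] at hv
          exact mul_nonneg (hGnn v) (by linarith)
        rw [← ofReal_integral_eq_lintegral_ofReal hint hae]
        congr 1
        rw [heq, integral_add hM1 hGint, hGprob]
    _ ≤ ENNReal.ofReal (144 * ((∫ v in Set.Ioi (0 : ℝ), v * G v) + 1) * ((V - V') + 1)) := by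
        rw [← ENNReal.ofReal_mul (by positivity)]
        exact ENNReal.ofReal_le_ofReal (le_of_eq (by ring))
end

section
/- Geometric estimate for identical obstacles (claim (B.7) in Appendix B): Let σ := (3/(4π))^{1/3}. There exists a constant K > 0 such that for every real V > 0, every real n ≥ 1, and every Z ∈ ℝ³ with |Z| ≤ n·(σ V^{1/3} + σ)/(V + n), one has vol( B(Z, σ((V+n)^{1/3} + 1)) \ B(0, σ(V^{1/3} + 1)) ) ≤ K·n. -/
open MeasureTheory


lemma tail_cube_ineq (a m n δ : ℝ) (ha1 : 1 ≤ a) (hm1 : 1 ≤ m) (hma : m ≤ a)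
    (hm : m ^ 3 = n) (hδ0 : 0 ≤ δ) (hδa : δ * a ^ 2 ≤ 3 * n) (hδ2 : δ ≤ 3 * m) :
    (a + 1 + δ) ^ 3 - (a + 1) ^ 3 ≤ 125 * n := by
  have ha0 : (0:ℝ) ≤ a := by linarith
  have e1 : 3 * (a + 1) ^ 2 * δ ≤ 36 * n := by
    have h4 : (a + 1) ^ 2 ≤ 4 * a ^ 2 := by nlinarith
    nlinarith [mul_le_mul_of_nonneg_right h4 hδ0]
  have e2 : 3 * (a + 1) * δ ^ 2 ≤ 54 * n := by
    have hδm : δ ^ 2 ≤ 3 * m * δ := by nlinarith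
    have hmaδ : m * (a * δ) ≤ a * (a * δ) :=
      mul_le_mul_of_nonneg_right hma (mul_nonneg ha0 hδ0)
    nlinarith [mul_nonneg hδ0 hδ0, mul_le_mul_of_nonneg_left hδ2 hδ0]
  have e3 : δ ^ 3 ≤ 27 * n := by
    have h1 : δ ^ 2 ≤ 9 * m ^ 2 := by nlinarith
    have h2 : δ ^ 3 ≤ 9 * m ^ 2 * δ := by nlinarith [mul_le_mul_of_nonneg_right h1 hδ0]
    have h3 : m ^ 2 ≤ a ^ 2 := by nlinarith
    have h4 : m ^ 2 * δ ≤ a ^ 2 * δ := mul_le_mul_of_nonneg_right h3 hδ0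
    nlinarith
  have hn0 : (0:ℝ) ≤ n := by nlinarith
  nlinarith [e1, e2, e3]

lemma key_real_ineq (V n a m c D : ℝ) (hV : 0 < V) (hn : 1 ≤ n)
    (ha : a ^ 3 = V) (ha0 : 0 < a) (hm : m ^ 3 = n) (hm1 : 1 ≤ m)
    (hc : c ^ 3 = V + n) (hc0 : 0 < c) (hD : D = n * (a + 1) / (V + n)) :
    (D + c + 1) ^ 3 - (a + 1) ^ 3 ≤ 125 * n := by
  have hVn : 0 < V + n := by linarith
  have hD0 : 0 ≤ D := by
    rw [hD]; positivity
  have hcam : c ≤ a + m := by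
    have h1 : c ^ 3 ≤ (a + m) ^ 3 := by
      nlinarith [sq_nonneg a, sq_nonneg m, mul_pos ha0 (by linarith : (0:ℝ) < m), ha0.le,
        (by linarith : (0:ℝ) ≤ m)]
    exact le_of_pow_le_pow_left₀ (by norm_num) (by positivity) h1
  have hca : a ≤ c := by
    have h1 : a ^ 3 ≤ c ^ 3 := by nlinarith
    exact le_of_pow_le_pow_left₀ (by norm_num) hc0.le h1
  have hcm : m ≤ c := by
    have h1 : m ^ 3 ≤ c ^ 3 := by nlinarith
    exact le_of_pow_le_pow_left₀ (by norm_num) hc0.le h1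
  rcases le_total V n with hVn' | hVn'
  · -- V ≤ n : everything is O(m)
    have ham : a ≤ m := by
      have h1 : a ^ 3 ≤ m ^ 3 := by nlinarith
      exact le_of_pow_le_pow_left₀ (by norm_num) (by linarith) h1
    have hDle : D ≤ a + 1 := by
      rw [hD, div_le_iff₀ hVn]
      nlinarith
    have hs : D + c + 1 ≤ 5 * m := by
      have : c ≤ 2 * m := by linarith
      linarith
    have hs0 : 0 ≤ D + c + 1 := by linarith
    have : (D + c + 1) ^ 3 ≤ (5 * m) ^ 3 := pow_le_pow_left₀ hs0 hs 3
    nlinarith [pow_nonneg (by linarith : (0:ℝ) ≤ a + 1) 3]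
  · -- n ≤ V : mean value type bound
    have hma : m ≤ a := by
      have h1 : m ^ 3 ≤ a ^ 3 := by nlinarith
      exact le_of_pow_le_pow_left₀ (by norm_num) ha0.le h1
    have ha1 : 1 ≤ a := le_trans hm1 hma
    have ha2 : 0 < a ^ 2 := by positivity
    have hcub : c ≤ a + n / (3 * a ^ 2) := by
      have ht0 : 0 ≤ n / (3 * a ^ 2) := by positivity
      have h1 : c ^ 3 ≤ (a + n / (3 * a ^ 2)) ^ 3 := by
        have key : a ^ 2 * (n / (3 * a ^ 2)) = n / 3 := by field_simp
        nlinarith [sq_nonneg (n / (3 * a ^ 2)), mul_nonneg ha0.le (sq_nonneg (n / (3 * a ^ 2))),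
          pow_nonneg ht0 3]
      exact le_of_pow_le_pow_left₀ (by norm_num) (by positivity) h1
    have hDle : D ≤ 2 * n / a ^ 2 := by
      rw [hD, div_le_div_iff₀ hVn ha2]
      have h1 : n * (a + 1) * a ^ 2 ≤ n * (2 * a) * a ^ 2 := by
        have : a + 1 ≤ 2 * a := by linarith
        nlinarith [mul_nonneg (by linarith : (0:ℝ) ≤ n) ha2.le]
      have h2 : n * (2 * a) * a ^ 2 = 2 * n * V := by rw [← ha]; ring
      nlinarith [mul_nonneg (by linarith : (0:ℝ) ≤ n) (by linarith : (0:ℝ) ≤ n)]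
    set δ := (c - a) + D with hδ
    have hδ0 : 0 ≤ δ := by simp only [hδ]; linarith
    have hδ1 : δ ≤ 3 * n / a ^ 2 := by
      have h1 : c - a ≤ n / (3 * a ^ 2) := by linarith
      have h2 : n / (3 * a ^ 2) + 2 * n / a ^ 2 ≤ 3 * n / a ^ 2 := by
        rw [div_add_div _ _ (by positivity : (3:ℝ) * a ^ 2 ≠ 0) (by positivity : a ^ 2 ≠ 0),
          div_le_div_iff₀ (by positivity) (by positivity)]
        nlinarith [mul_nonneg (by linarith : (0:ℝ) ≤ n) (pow_nonneg ha0.le 4)]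
      linarith
    have hδa : δ * a ^ 2 ≤ 3 * n := by
      have := (le_div_iff₀ ha2).mp hδ1
      linarith
    have hδ2 : δ ≤ 3 * m := by
      have hcma : c - a ≤ m := by linarith
      have h1 : 2 * n / a ^ 2 ≤ 2 * m := by
        rw [div_le_iff₀ ha2]
        nlinarith [mul_nonneg (by linarith : (0:ℝ) ≤ m) (sq_nonneg (a - m))]
      linarith
    have hexp : D + c + 1 = a + 1 + δ := by simp only [hδ]; ring
    rw [hexp]
    exact tail_cube_ineq a m n δ ha1 hm1 hma hm hδ0 hδa hδ2

/-- Geometric estimate for identical obstacles (claim (B.7)): with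
`σ = (3/(4π))^{1/3}` there is `K > 0` such that for every `V > 0`, `n ≥ 1` and every
center `Z` with `|Z| ≤ n(σV^{1/3}+σ)/(V+n)`, the volume of
`B(Z, σ((V+n)^{1/3}+1)) \ B(0, σ(V^{1/3}+1))` is at most `K·n`. -/
theorem geometric_estimate_identical_obstacles
    (σ : ℝ) (hσ : σ = (3 / (4 * Real.pi)) ^ ((1 : ℝ) / 3)) :
    ∃ K : ℝ, 0 < K ∧
      ∀ V : ℝ, 0 < V → ∀ n : ℝ, 1 ≤ n →
        ∀ Z : EuclideanSpace ℝ (Fin 3),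
          ‖Z‖ ≤ n * (σ * V ^ ((1 : ℝ) / 3) + σ) / (V + n) →
          volume (Metric.closedBall Z (σ * ((V + n) ^ ((1 : ℝ) / 3) + 1)) \
              Metric.closedBall (0 : EuclideanSpace ℝ (Fin 3)) (σ * (V ^ ((1 : ℝ) / 3) + 1)))
            ≤ ENNReal.ofReal (K * n) := by
  have hπ : (0:ℝ) < Real.pi := Real.pi_pos
  have hσ0 : 0 < σ := by
    rw [hσ]; exact Real.rpow_pos_of_pos (by positivity) _
  set C : ℝ := Real.sqrt Real.pi ^ 3 / Real.Gamma ((3:ℝ) / 2 + 1) with hC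
  have hC0 : 0 < C := by
    apply div_pos (by positivity)
    exact Real.Gamma_pos_of_pos (by norm_num)
  refine ⟨125 * σ ^ 3 * C, by positivity, ?_⟩
  intro V hV n hn Z hZ
  set a := V ^ ((1:ℝ)/3) with hadef
  set m := n ^ ((1:ℝ)/3) with hmdef
  set c := (V + n) ^ ((1:ℝ)/3) with hcdef
  have hn0 : (0:ℝ) < n := by linarith
  have hVn : (0:ℝ) < V + n := by linarith
  have ha0 : 0 < a := Real.rpow_pos_of_pos hV _
  have hm0 : 0 < m := Real.rpow_pos_of_pos hn0 _
  have hc0 : 0 < c := Real.rpow_pos_of_pos hVn _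
  have cube : ∀ x : ℝ, 0 < x → (x ^ ((1:ℝ)/3)) ^ 3 = x := by
    intro x hx
    rw [← Real.rpow_natCast (x ^ ((1:ℝ)/3)) 3, ← Real.rpow_mul hx.le]
    norm_num
  have ha : a ^ 3 = V := cube V hV
  have hm : m ^ 3 = n := cube n hn0
  have hc : c ^ 3 = V + n := cube (V + n) hVn
  have hm1 : 1 ≤ m := by
    by_contra h
    push_neg at h
    have h3 : m ^ 3 < 1 := by nlinarith [mul_pos hm0 hm0]
    rw [hm] at h3; linarith
  clear_value a m c
  set D : ℝ := n * (a + 1) / (V + n) with hD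
  have hD0 : 0 ≤ D := by positivity
  -- key real inequality
  have hkey : (D + c + 1) ^ 3 - (a + 1) ^ 3 ≤ 125 * n :=
    key_real_ineq V n a m c D hV hn ha ha0 hm hm1 hc hc0 rfl
  set R : ℝ := σ * (a + 1) with hR
  set R' : ℝ := σ * (c + 1) with hR'
  have hR0 : 0 ≤ R := by positivity
  have hRR' : R ≤ R' := by
    have : a ≤ c := by
      have h1 : a ^ 3 ≤ c ^ 3 := by nlinarith
      exact le_of_pow_le_pow_left₀ (by norm_num) hc0.le h1
    have := hσ0.le
    rw [hR, hR']; nlinarith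
  set ρ : ℝ := ‖Z‖ + R' with hρ
  clear_value D R R' ρ
  have hR'0 : 0 ≤ R' := le_trans hR0 hRR'
  have hρ0 : 0 ≤ ρ := by rw [hρ]; exact add_nonneg (norm_nonneg Z) hR'0
  have hRρ : R ≤ ρ := le_trans hRR' (by rw [hρ]; exact le_add_of_nonneg_left (norm_nonneg Z))
  -- subset of annulus
  have hsub : Metric.closedBall Z R' \ Metric.closedBall (0 : EuclideanSpace ℝ (Fin 3)) R ⊆
      Metric.closedBall (0 : EuclideanSpace ℝ (Fin 3)) ρ \ Metric.closedBall 0 R := by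
    apply Set.diff_subset_diff_left
    apply Metric.closedBall_subset_closedBall'
    rw [dist_zero_right, hρ]; linarith
  refine le_trans (measure_mono hsub) ?_
  have hvol : ∀ r : ℝ, 0 ≤ r →
      volume (Metric.closedBall (0 : EuclideanSpace ℝ (Fin 3)) r) = ENNReal.ofReal (r ^ 3 * C) := by
    intro r hr
    rw [EuclideanSpace.volume_closedBall]
    simp only [Fintype.card_fin]
    rw [← ENNReal.ofReal_pow hr, ← ENNReal.ofReal_mul (by positivity)]
    norm_num [hC]
  have hdiff : volume (Metric.closedBall (0 : EuclideanSpace ℝ (Fin 3)) ρ \ Metric.closedBall 0 R)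
      = ENNReal.ofReal (ρ ^ 3 * C) - ENNReal.ofReal (R ^ 3 * C) := by
    rw [measure_diff (Metric.closedBall_subset_closedBall hRρ)
      measurableSet_closedBall.nullMeasurableSet measure_closedBall_lt_top.ne,
      hvol ρ hρ0, hvol R hR0]
  rw [hdiff, ← ENNReal.ofReal_sub _ (by positivity)]
  apply ENNReal.ofReal_le_ofReal
  -- remaining real inequality
  have hZ' : ‖Z‖ ≤ σ * D := by
    have : n * (σ * a + σ) / (V + n) = σ * D := by rw [hD]; field_simp
    linarith [hZ.trans_eq this]
  have hρle : ρ ≤ σ * (D + c + 1) := by rw [hρ, hR']; nlinarith [hσ0.le]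
  have h1 : ρ ^ 3 ≤ (σ * (D + c + 1)) ^ 3 := pow_le_pow_left₀ hρ0 hρle 3
  have h2 : ρ ^ 3 - R ^ 3 ≤ σ ^ 3 * (125 * n) := by
    calc ρ ^ 3 - R ^ 3 ≤ (σ * (D + c + 1)) ^ 3 - R ^ 3 := by linarith
      _ = σ ^ 3 * ((D + c + 1) ^ 3 - (a + 1) ^ 3) := by rw [hR]; ring
      _ ≤ σ ^ 3 * (125 * n) := mul_le_mul_of_nonneg_left hkey (pow_pos hσ0 3).le
  calc ρ ^ 3 * C - R ^ 3 * C = (ρ ^ 3 - R ^ 3) * C := by ring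
    _ ≤ (σ ^ 3 * (125 * n)) * C := mul_le_mul_of_nonneg_right h2 hC0.le
    _ = 125 * σ ^ 3 * C * n := by ring
end

section
/- Iterated exponential-sum estimate (generating function bound in Lemma 5.5): There exists γ₀ ∈ (0, 1/2) such that for every real γ ∈ [0, γ₀], every real a ≥ 0 and every integer m ≥ 1, Σ_{n₁≥1} Σ_{n₂≥1} … Σ_{n_m≥1} [ (γ a)^{n₁}/n₁! · ∏_{j=2}^{m} (γ n_{j−1})^{n_j}/n_j! ] ≤ e^{γ a/(1−2γ)} − 1. -/
open scoped BigOperators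

noncomputable def Fsum (γ a : ℝ) (m : ℕ) (n : Fin m → ℕ) : ℝ :=
  if ∀ j, 1 ≤ n j then
    ∏ j : Fin m,
      (γ * (if (j : ℕ) = 0 then a
        else (n ⟨(j : ℕ) - 1, Nat.lt_of_le_of_lt (Nat.sub_le _ _) j.isLt⟩ : ℝ))) ^ (n j) /
        ((n j).factorial : ℝ)
  else 0

lemma Fsum_nonneg {γ a : ℝ} (hγ : 0 ≤ γ) (ha : 0 ≤ a) (m : ℕ) (n : Fin m → ℕ) :
    0 ≤ Fsum γ a m n := by
  unfold Fsum
  split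
  · apply Finset.prod_nonneg
    intro j _
    apply div_nonneg _ (by positivity)
    apply pow_nonneg
    apply mul_nonneg hγ
    split
    · exact ha
    · positivity
  · exact le_refl 0

lemma cons_prev (m : ℕ) (n₀ : ℕ) (rest : Fin m → ℕ) (i : Fin m) (h : (i : ℕ) < m + 1) :
    (Fin.cons n₀ rest : Fin (m+1) → ℕ) (⟨(i : ℕ), h⟩ : Fin (m+1)) =
      if (i : ℕ) = 0 then n₀ else rest ⟨(i : ℕ) - 1, by omega⟩ := by
  rcases i with ⟨iv, hiv⟩
  cases iv with
  | zero => rfl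
  | succ k =>
    have e1 : (⟨k + 1, h⟩ : Fin (m+1)) = Fin.succ ⟨k, by omega⟩ := rfl
    simp only [e1, Fin.cons_succ]
    rfl

lemma Fsum_cons (γ a : ℝ) (m : ℕ) (n₀ : ℕ) (rest : Fin m → ℕ) :
    Fsum γ a (m + 1) (Fin.cons n₀ rest) =
      (if 1 ≤ n₀ then (γ * a) ^ n₀ / (n₀.factorial : ℝ) else 0) *
        Fsum γ (n₀ : ℝ) m rest := by
  unfold Fsum
  have hcond : (∀ j : Fin (m+1), 1 ≤ (Fin.cons n₀ rest : Fin (m+1) → ℕ) j) ↔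
      (1 ≤ n₀ ∧ ∀ j : Fin m, 1 ≤ rest j) := by
    constructor
    · intro h
      exact ⟨by simpa using h 0, fun j => by simpa using h j.succ⟩
    · rintro ⟨h0, hr⟩ j
      refine Fin.cases ?_ ?_ j
      · simpa using h0
      · intro i; simpa using hr i
  by_cases h0 : 1 ≤ n₀
  · by_cases hr : ∀ j : Fin m, 1 ≤ rest j
    · rw [if_pos (hcond.mpr ⟨h0, hr⟩), if_pos h0, if_pos hr]
      rw [Fin.prod_univ_succ]
      apply congrArg₂ (· * ·)
      · simp
      · apply Finset.prod_congr rfl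
        intro i _
        have hidx : (⟨((Fin.succ i : Fin (m+1)) : ℕ) - 1, by have := (Fin.succ i).isLt; omega⟩ : Fin (m+1))
            = ⟨(i : ℕ), by omega⟩ := by
          apply Fin.ext
          simp
        have hne : ¬ ((Fin.succ i : Fin (m+1)) : ℕ) = 0 := by simp
        rw [if_neg hne, hidx, cons_prev m n₀ rest i (by omega), Fin.cons_succ]
        by_cases hi : (i : ℕ) = 0 <;> simp [hi]
    · rw [if_neg (fun hh => hr (hcond.mp hh).2), if_neg hr, mul_zero]
  · rw [if_neg (fun hh => h0 (hcond.mp hh).1), if_neg h0, zero_mul]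

lemma tsum_ite_exp (x : ℝ) (hx : 0 ≤ x) :
    Summable (fun k : ℕ => if 1 ≤ k then x ^ k / (k.factorial : ℝ) else 0) ∧
    ∑' k : ℕ, (if 1 ≤ k then x ^ k / (k.factorial : ℝ) else 0) = Real.exp x - 1 := by
  have hsum : Summable (fun k : ℕ => x ^ k / (k.factorial : ℝ)) :=
    Real.summable_pow_div_factorial x
  have hs : Summable (fun k : ℕ => if 1 ≤ k then x ^ k / (k.factorial : ℝ) else 0) := by
    apply Summable.of_nonneg_of_le _ _ hsum
    · intro k
      split
      · positivity
      · exact le_refl 0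
    · intro k
      split
      · exact le_refl _
      · positivity
  refine ⟨hs, ?_⟩
  have hexp : Real.exp x = ∑' k : ℕ, x ^ k / (k.factorial : ℝ) := by
    rw [Real.exp_eq_exp_ℝ, NormedSpace.exp_eq_tsum_div]
  rw [Summable.tsum_eq_zero_add hs]
  simp only [if_neg (by omega : ¬ (1:ℕ) ≤ 0), zero_add]
  have h2 : ∀ k : ℕ, (if 1 ≤ k + 1 then x ^ (k+1) / ((k+1).factorial : ℝ) else 0)
      = x ^ (k+1) / ((k+1).factorial : ℝ) := fun k => if_pos (by omega)
  simp only [h2]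
  rw [hexp, Summable.tsum_eq_zero_add hsum]
  norm_num

lemma exp_key {γ : ℝ} (hγ0 : 0 ≤ γ) (hγ : γ ≤ 1/4) :
    Real.exp (γ / (1 - 2*γ)) ≤ 1 / (1 - 2*γ) := by
  have h1 : (0:ℝ) < 1 - 2*γ := by linarith
  have h2 : γ / (1 - 2*γ) ≤ 2*γ := by
    rw [div_le_iff₀ h1]; nlinarith
  have h3 : Real.exp (γ / (1-2*γ)) ≤ Real.exp (2*γ) := Real.exp_le_exp.mpr h2
  have h4 : Real.exp (2*γ) ≤ 1 / (1 - 2*γ) := by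
    rw [le_div_iff₀ h1]
    have h5 : 1 - 2*γ ≤ Real.exp (-(2*γ)) := by
      have := Real.add_one_le_exp (-(2*γ)); linarith
    calc Real.exp (2*γ) * (1 - 2*γ) ≤ Real.exp (2*γ) * Real.exp (-(2*γ)) := by
          apply mul_le_mul_of_nonneg_left h5 (Real.exp_nonneg _)
      _ = 1 := by rw [← Real.exp_add]; simp
  exact h3.trans h4

lemma pointwise_bound {γ a : ℝ} (hγ0 : 0 ≤ γ) (hγ : γ ≤ 1/4) (ha : 0 ≤ a) (k : ℕ) :
    (γ * a) ^ k / (k.factorial : ℝ) * (Real.exp (γ * k / (1 - 2*γ)) - 1)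
      ≤ (γ * a / (1 - 2*γ)) ^ k / (k.factorial : ℝ) := by
  have h1 : (0:ℝ) < 1 - 2*γ := by linarith
  have hK : Real.exp (γ * k / (1 - 2*γ)) = (Real.exp (γ / (1-2*γ))) ^ k := by
    rw [← Real.exp_nat_mul]
    ring_nf
  have hfac : (0:ℝ) < (k.factorial : ℝ) := by positivity
  have hb : (γ * a) * Real.exp (γ / (1-2*γ)) ≤ (γ * a) * (1 / (1 - 2*γ)) :=
    mul_le_mul_of_nonneg_left (exp_key hγ0 hγ) (by positivity)
  calc (γ * a) ^ k / (k.factorial : ℝ) * (Real.exp (γ * k / (1 - 2*γ)) - 1)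
      ≤ (γ * a) ^ k / (k.factorial : ℝ) * (Real.exp (γ / (1-2*γ))) ^ k := by
        apply mul_le_mul_of_nonneg_left _ (by positivity)
        rw [← hK]; linarith [Real.exp_pos (γ * k / (1 - 2*γ))]
    _ = ((γ * a) * Real.exp (γ / (1-2*γ))) ^ k / (k.factorial : ℝ) := by
        rw [mul_pow]; ring
    _ ≤ ((γ * a) * (1 / (1 - 2*γ))) ^ k / (k.factorial : ℝ) := by
        rw [div_le_div_iff_of_pos_right hfac]
        exact pow_le_pow_left₀ (by positivity) hb k
    _ = (γ * a / (1 - 2*γ)) ^ k / (k.factorial : ℝ) := by ring_nf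

lemma main_bound {γ : ℝ} (hγ0 : 0 ≤ γ) (hγ : γ ≤ 1/4) (m : ℕ) :
    ∀ a : ℝ, 0 ≤ a →
      ∑' n : Fin (m+1) → ℕ, ENNReal.ofReal (Fsum γ a (m+1) n)
        ≤ ENNReal.ofReal (Real.exp (γ * a / (1 - 2*γ)) - 1) := by
  have h1 : (0:ℝ) < 1 - 2*γ := by linarith
  induction m with
  | zero =>
    intro a ha
    have he : ∑' n : Fin 1 → ℕ, ENNReal.ofReal (Fsum γ a 1 n)
        = ∑' k : ℕ, ENNReal.ofReal (Fsum γ a 1 ((Equiv.funUnique (Fin 1) ℕ).symm k)) :=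
      ((Equiv.funUnique (Fin 1) ℕ).symm.tsum_eq _).symm
    rw [he]
    have hF : ∀ k : ℕ, Fsum γ a 1 ((Equiv.funUnique (Fin 1) ℕ).symm k)
        = if 1 ≤ k then (γ * a) ^ k / (k.factorial : ℝ) else 0 := by
      intro k
      unfold Fsum
      simp [Fin.forall_fin_one]
    simp only [hF]
    have hx : 0 ≤ γ * a := mul_nonneg hγ0 ha
    obtain ⟨hs, hv⟩ := tsum_ite_exp (γ * a) hx
    rw [← ENNReal.ofReal_tsum_of_nonneg (fun k => by split <;> positivity) hs, hv]
    apply ENNReal.ofReal_le_ofReal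
    have hle : γ * a ≤ γ * a / (1 - 2*γ) := by
      rw [le_div_iff₀ h1]; nlinarith
    have := Real.exp_le_exp.mpr hle
    linarith
  | succ m ih =>
    intro a ha
    have he : ∑' n : Fin (m+2) → ℕ, ENNReal.ofReal (Fsum γ a (m+2) n)
        = ∑' p : ℕ × (Fin (m+1) → ℕ),
            ENNReal.ofReal (Fsum γ a (m+2) (Fin.cons p.1 p.2)) :=
      ((Fin.consEquiv (fun _ : Fin (m+2) => ℕ)).tsum_eq _).symm
    rw [he, ENNReal.tsum_prod']
    have step1 : ∀ n₀ : ℕ,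
        ∑' rest : Fin (m+1) → ℕ, ENNReal.ofReal (Fsum γ a (m+2) (Fin.cons n₀ rest))
          ≤ ENNReal.ofReal (if 1 ≤ n₀ then (γ * a) ^ n₀ / (n₀.factorial : ℝ) else 0) *
              ENNReal.ofReal (Real.exp (γ * n₀ / (1 - 2*γ)) - 1) := by
      intro n₀
      have hmul : ∀ rest : Fin (m+1) → ℕ,
          ENNReal.ofReal (Fsum γ a (m+2) (Fin.cons n₀ rest))
            = ENNReal.ofReal (if 1 ≤ n₀ then (γ * a) ^ n₀ / (n₀.factorial : ℝ) else 0) *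
                ENNReal.ofReal (Fsum γ (n₀ : ℝ) (m+1) rest) := by
        intro rest
        rw [Fsum_cons γ a (m+1) n₀ rest, ENNReal.ofReal_mul (by split <;> positivity)]
      simp only [hmul]
      rw [ENNReal.tsum_mul_left]
      exact mul_le_mul_right (ih (n₀ : ℝ) (Nat.cast_nonneg n₀)) _
    calc ∑' n₀ : ℕ, ∑' rest : Fin (m+1) → ℕ,
            ENNReal.ofReal (Fsum γ a (m+2) (Fin.cons n₀ rest))
        ≤ ∑' n₀ : ℕ, ENNReal.ofReal (if 1 ≤ n₀ then (γ * a) ^ n₀ / (n₀.factorial : ℝ) else 0) *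
              ENNReal.ofReal (Real.exp (γ * n₀ / (1 - 2*γ)) - 1) :=
          ENNReal.tsum_le_tsum step1
      _ ≤ ∑' n₀ : ℕ, ENNReal.ofReal
            (if 1 ≤ n₀ then (γ * a / (1 - 2*γ)) ^ n₀ / (n₀.factorial : ℝ) else 0) := by
          apply ENNReal.tsum_le_tsum
          intro k
          by_cases hk : 1 ≤ k
          · simp only [hk, if_true]
            rw [← ENNReal.ofReal_mul (by positivity)]
            exact ENNReal.ofReal_le_ofReal (pointwise_bound hγ0 hγ ha k)
          · simp [hk]
      _ ≤ ENNReal.ofReal (Real.exp (γ * a / (1 - 2*γ)) - 1) := by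
          have hx : 0 ≤ γ * a / (1 - 2*γ) := by positivity
          obtain ⟨hs, hv⟩ := tsum_ite_exp (γ * a / (1 - 2*γ)) hx
          rw [← ENNReal.ofReal_tsum_of_nonneg (fun k => by split <;> positivity) hs, hv]

/-- Iterated exponential-sum estimate (generating function bound in Lemma 5.5):
there is `γ₀ ∈ (0,1/2)` such that for `0 ≤ γ ≤ γ₀`, `a ≥ 0` and `m ≥ 1`,
`Σ_{n₁,…,n_m ≥ 1} (γa)^{n₁}/n₁! ∏_{j=2}^m (γ n_{j−1})^{n_j}/n_j! ≤ e^{γa/(1−2γ)} − 1`. -/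
theorem iterated_exponential_sum_estimate :
    ∃ γ₀ : ℝ, 0 < γ₀ ∧ γ₀ < 1 / 2 ∧
      ∀ γ : ℝ, 0 ≤ γ → γ ≤ γ₀ → ∀ a : ℝ, 0 ≤ a → ∀ m : ℕ, 1 ≤ m →
        (∑' n : Fin m → ℕ,
            if ∀ j, 1 ≤ n j then
              ∏ j : Fin m,
                (γ * (if (j : ℕ) = 0 then a
                  else (n ⟨(j : ℕ) - 1, by have := j.isLt; omega⟩ : ℝ))) ^ (n j) /
                  ((n j).factorial : ℝ)
            else 0)
          ≤ Real.exp (γ * a / (1 - 2 * γ)) - 1 := by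
  refine ⟨1/4, by norm_num, by norm_num, ?_⟩
  intro γ hγ0 hγ a ha m hm
  obtain ⟨m, rfl⟩ : ∃ k, m = k + 1 := ⟨m - 1, by omega⟩
  show (∑' n : Fin (m+1) → ℕ, Fsum γ a (m+1) n) ≤ Real.exp (γ * a / (1 - 2 * γ)) - 1
  have h1 : (0:ℝ) < 1 - 2*γ := by linarith
  have hC : 0 ≤ Real.exp (γ * a / (1 - 2 * γ)) - 1 := by
    have hx : 0 ≤ γ * a / (1 - 2*γ) := by positivity
    linarith [Real.one_le_exp hx]
  by_cases hsum : Summable (fun n : Fin (m+1) → ℕ => Fsum γ a (m+1) n)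
  · have hmain := main_bound hγ0 hγ m a ha
    rw [← ENNReal.ofReal_tsum_of_nonneg (fun n => Fsum_nonneg hγ0 ha (m+1) n) hsum] at hmain
    exact (ENNReal.ofReal_le_ofReal_iff hC).mp hmain
  · rw [tsum_eq_zero_of_not_summable hsum]
    exact hC
end
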